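/- If each node of T_L^d is independently black with probability p = μ · L^{-d/2^{r-1}} for a constant μ > 0, then the probability that the even-part of at least one of a family of ⌊L^d/γ⌋ pairwise disjoint r-dimensional hyper-squares is fully black is at least 1 − exp(−μ^{2^{r-1}}/γ) − o(1); in particular black color survives in two-way r-BP with probability bounded away from 0 as L → ∞. -/

import Mathlib

open scoped Classical ENNReal
open MeasureTheory Filter

/-- Vertices of the `d`-dimensional torus with side length `L`. -/
abbrev TorusV (d L : ℕ) := Fin d → ZMod L

/-- The `d`-dimensional torus graph `T_L^d`: two nodes are adjacent iff they differ
by `±1 (mod L)` in exactly one coordinate. -/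
def torusGraph (d L : ℕ) : SimpleGraph (TorusV d L) where
  Adj v u := v ≠ u ∧ ∃ j, (u j = v j + 1 ∨ u j = v j - 1) ∧ ∀ k, k ≠ j → u k = v k
  symm := by
    constructor
    rintro v u ⟨hne, j, hj, hk⟩
    refine ⟨hne.symm, j, ?_, fun k hkj => (hk k hkj).symm⟩
    rcases hj with h | h
    · right; rw [h]; ring
    · left; rw [h]; ring
  loopless := by constructor; rintro v ⟨hne, -⟩; exact hne rfl

/-- One round of two-way `r`-bootstrap percolation on a finite graph:
a node is black in the next round iff it has at least `r` black neighbors. -/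
noncomputable def gStep {V : Type*} [Fintype V] (G : SimpleGraph V) (r : ℕ)
    (C : V → Bool) : V → Bool :=
  fun v => decide (r ≤ (Finset.univ.filter (fun u => G.Adj v u ∧ C u = true)).card)

/-- One round of (ordinary) `r`-bootstrap percolation: black nodes stay black, and a white
node becomes black iff it has at least `r` black neighbors. -/
noncomputable def bpStep {V : Type*} [Fintype V] (G : SimpleGraph V) (r : ℕ)
    (C : V → Bool) : V → Bool :=
  fun v => C v || decide (r ≤ (Finset.univ.filter (fun u => G.Adj v u ∧ C u = true)).card)

/-- One round of the majority model: each node adopts the most frequent color among its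
neighbors, keeping its own color in case of a tie. -/
noncomputable def majStep {V : Type*} [Fintype V] (G : SimpleGraph V)
    (C : V → Bool) : V → Bool :=
  fun v =>
    let b := (Finset.univ.filter (fun u => G.Adj v u ∧ C u = true)).card
    let w := (Finset.univ.filter (fun u => G.Adj v u ∧ C u = false)).card
    if w < b then true else if b < w then false else C v

/-- `S` is an `(r,c)`-robust set in two-way `r`-BP: whenever all nodes of `S` have color `c`,
they keep color `c` in all subsequent configurations. (`true` = black, `false` = white.) -/
noncomputable def isRobust {V : Type*} [Fintype V] (G : SimpleGraph V) (r : ℕ) (c : Bool)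
    (S : Finset V) : Prop :=
  ∀ C : V → Bool, (∀ v ∈ S, C v = c) → ∀ t, ∀ v ∈ S, (gStep G r)^[t] C v = c

/-- `S` is a b-eternal set in two-way `r`-BP: whenever all nodes of `S` are black, every
subsequent configuration contains at least one black node. -/
noncomputable def isBEternal {V : Type*} [Fintype V] (G : SimpleGraph V) (r : ℕ)
    (S : Finset V) : Prop :=
  ∀ C : V → Bool, (∀ v ∈ S, C v = true) → ∀ t, ∃ v, (gStep G r)^[t] C v = true

/-- The node of a hyper-square at start `i` obtained by incrementing the coordinates in `S`. -/
def hsNode {d L : ℕ} (i : TorusV d L) (S : Finset (Fin d)) : TorusV d L :=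
  fun j => if j ∈ S then i j + 1 else i j

/-- The hyper-square with starting node `i` and coordinate set `J` (an `J.card`-dimensional
hyper-square). -/
noncomputable def hyperSquare {d L : ℕ} (i : TorusV d L) (J : Finset (Fin d)) :
    Finset (TorusV d L) :=
  J.powerset.image (hsNode i)

/-- The even-part of the hyper-square: nodes differing from the start in an even number of
coordinates. -/
noncomputable def evenPart {d L : ℕ} (i : TorusV d L) (J : Finset (Fin d)) :
    Finset (TorusV d L) :=
  (J.powerset.filter (fun S => Even S.card)).image (hsNode i)

/-- The odd-part of the hyper-square: nodes differing from the start in an odd number of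
coordinates. -/
noncomputable def oddPart {d L : ℕ} (i : TorusV d L) (J : Finset (Fin d)) :
    Finset (TorusV d L) :=
  (J.powerset.filter (fun S => Odd S.card)).image (hsNode i)

/-- The hyper-rectangle of size `l 0 × ⋯ × l (d-1)` starting at node `i`. -/
noncomputable def hyperRect {d L : ℕ} [NeZero L] (i : TorusV d L) (l : Fin d → ℕ) :
    Finset (TorusV d L) :=
  Finset.univ.filter (fun v => ∀ j, ∃ m : ℕ, m ≤ l j ∧ v j = i j + (m : ZMod L))

/-- The parity of a hyper-square of the tiling: parity of the sum of the last `d - r`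
coordinates of its starting node. -/
def tpar (d L r : ℕ) (i : TorusV d L) : ℕ :=
  (∑ j ∈ Finset.univ.filter (fun j : Fin d => r ≤ (j : ℕ)), (i j).val) % 2

/-- A hyper-square of the tiling (start `i`, coordinate set = first `r` coordinates) is
occupied: its even-part is fully black if its parity is even, and its odd-part is fully
black if its parity is odd. -/
noncomputable def occupiedHS (d L r : ℕ) (i : TorusV d L) (C : TorusV d L → Bool) : Prop :=
  if tpar d L r i = 0 then
    ∀ v ∈ evenPart i (Finset.univ.filter (fun j : Fin d => (j : ℕ) < r)), C v = true
  else
    ∀ v ∈ oddPart i (Finset.univ.filter (fun j : Fin d => (j : ℕ) < r)), C v = true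

/-- The Bernoulli measure on `Bool` with success (black) probability `p` (clamped to `1`). -/
noncomputable def bernoulliMeasure (p : ℝ≥0∞) : Measure Bool :=
  (PMF.bernoulli (min p 1).toNNReal
    (le_trans (ENNReal.toNNReal_mono ENNReal.one_ne_top (min_le_right p 1))
      (le_of_eq ENNReal.toNNReal_one))).toMeasure

/-- The product measure on configurations: each node is independently black with
probability `p`. -/
noncomputable def productMeasure (V : Type*) [Fintype V] (p : ℝ≥0∞) :
    Measure (V → Bool) :=
  Measure.pi (fun _ : V => bernoulliMeasure p)


/-!
Toggling one coordinate `j ∈ J` of a node of the hyper-square with coordinate set `J` gives a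
torus neighbour whose subset has the opposite parity, so in two-way `#J`-BP a fully black
even-part forces a fully black odd-part in the next round and vice versa: the even-part is
b-eternal.

Under the product measure, fully-black events of pairwise disjoint node sets are independent.
With `N` disjoint hyper-squares whose even-parts have at most `m = 2^(r-1)` nodes, the
probability that no even-part is fully black is at most `(1 - p^m)^N ≤ exp (-N p^m)`, and
`p^m = μ^m / L^d`. For `N = ⌊L^d / 2^r⌋` this gives the bound `1 - exp (-μ^m / 2^r) - o(1)`;
for survival, the `⌊L/2⌋^d ≥ L^d / 4^d` hyper-squares starting at nodes with even coordinates
below `L - 1` are pairwise disjoint.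
-/

open Finset Function
open scoped symmDiff Topology

section ProductMeasure

variable {V : Type*} [Fintype V] (p : ℝ≥0∞)

instance isProbabilityMeasure_bernoulliMeasure : IsProbabilityMeasure (bernoulliMeasure p) := by
  unfold bernoulliMeasure; infer_instance

instance isProbabilityMeasure_productMeasure : IsProbabilityMeasure (productMeasure V p) := by
  unfold productMeasure; infer_instance

theorem bernoulliMeasure_singleton_true : bernoulliMeasure p {true} = min p 1 := by
  rw [bernoulliMeasure, PMF.toMeasure_apply_singleton _ _ (measurableSet_singleton _)]
  exact ENNReal.coe_toNNReal (ne_top_of_le_ne_top ENNReal.one_ne_top (min_le_right _ _))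

def fullyBlack (A : Finset V) : Set (V → Bool) := {C | ∀ v ∈ A, C v = true}

omit [Fintype V] in
theorem dependsOn_mem_fullyBlack (A : Finset V) : DependsOn (· ∈ fullyBlack A) (A : Set V) :=
  fun _ _ h => propext <| forall₂_congr fun v hv => by rw [h v hv]

theorem productMeasure_fullyBlack (A : Finset V) :
    productMeasure V p (fullyBlack A) = min p 1 ^ #A := by
  have h : fullyBlack A = (A : Set V).pi fun _ => {true} := by
    ext C; simp [fullyBlack]
  rw [h, productMeasure, Measure.pi_pi_finset, bernoulliMeasure_singleton_true, prod_const]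

theorem productMeasure_inter_of_dependsOn {S T : Finset V} (hST : Disjoint S T)
    {E F : Set (V → Bool)} (hE : DependsOn (· ∈ E) (S : Set V))
    (hF : DependsOn (· ∈ F) (T : Set V)) :
    productMeasure V p (E ∩ F) = productMeasure V p E * productMeasure V p F := by
  have hind : ProbabilityTheory.IndepFun (fun C (v : S) => C v) (fun C (v : T) => C v)
      (productMeasure V p) :=
    (ProbabilityTheory.iIndepFun_pi (X := fun _ => id) fun _ => aemeasurable_id).indepFun_finset
      S T hST fun v => measurable_pi_apply v
  have hpre : ∀ (U : Finset V) (G : Set (V → Bool)), DependsOn (· ∈ G) (U : Set V) →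
      G = (fun C (v : U) => C v) ⁻¹' ((fun C (v : U) => C v) '' G) := by
    refine fun U G hG => (Set.subset_preimage_image _ _).antisymm ?_
    rintro C ⟨C', hC', hCC'⟩
    exact (hG fun v hv => (congrFun hCC' ⟨v, hv⟩)).mp hC'
  rw [hpre S E hE, hpre T F hF]
  exact hind.measure_inter_preimage_eq_mul _ _ (Set.to_countable _).measurableSet
    (Set.to_countable _).measurableSet

variable {ι : Type*} {A : ι → Finset V}

theorem productMeasure_forall_not_mem_fullyBlack (hA : Pairwise (Disjoint on A))
    (t : Finset ι) :
    productMeasure V p {C | ∀ a ∈ t, C ∉ fullyBlack (A a)} =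
      ∏ a ∈ t, (1 - min p 1 ^ #(A a)) := by
  induction t using Finset.induction_on with
  | empty => simp
  | insert b t hb ih =>
    have hsplit : {C | ∀ a ∈ insert b t, C ∉ fullyBlack (A a)}
        = (fullyBlack (A b))ᶜ ∩ {C | ∀ a ∈ t, C ∉ fullyBlack (A a)} := by
      ext C; simp
    have hdisj : Disjoint (A b) (t.biUnion A) :=
      (disjoint_biUnion_right _ _ _).2 fun a ha => hA fun hba => hb (hba ▸ ha)
    have hdep :
        DependsOn (· ∈ {C | ∀ a ∈ t, C ∉ fullyBlack (A a)}) (t.biUnion A : Set V) :=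
      fun C C' h => propext <| forall₂_congr fun a ha => not_congr <|
        Eq.to_iff <| dependsOn_mem_fullyBlack (A a) fun v hv =>
          h v (mem_coe.2 (mem_biUnion.2 ⟨a, ha, hv⟩))
    have hdepc : DependsOn (· ∈ (fullyBlack (A b))ᶜ) (A b : Set V) :=
      fun C C' h => congrArg Not (dependsOn_mem_fullyBlack (A b) h)
    rw [hsplit, productMeasure_inter_of_dependsOn p hdisj hdepc hdep, ih, prod_insert hb,
      prob_compl_eq_one_sub (Set.to_countable _).measurableSet, productMeasure_fullyBlack]

theorem productMeasure_exists_mem_fullyBlack_ge [Fintype ι] (hA : Pairwise (Disjoint on A))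
    {m : ℕ} (hm : ∀ a, #(A a) ≤ m) {q : ℝ} (hq0 : 0 ≤ q) (hq1 : q ≤ 1) :
    ENNReal.ofReal (1 - Real.exp (-(Fintype.card ι * q ^ m))) ≤
      productMeasure V (ENNReal.ofReal q) {C | ∃ a, C ∈ fullyBlack (A a)} := by
  have hmin : min (ENNReal.ofReal q) 1 = ENNReal.ofReal q :=
    min_eq_left (ENNReal.ofReal_le_one.2 hq1)
  have hcompl :
      {C | ∃ a, C ∈ fullyBlack (A a)} = {C | ∀ a ∈ univ, C ∉ fullyBlack (A a)}ᶜ := by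
    ext C; simp
  have hblock : ∀ a, 1 - ENNReal.ofReal q ^ #(A a) ≤ ENNReal.ofReal (Real.exp (-q ^ m)) := by
    intro a
    calc 1 - ENNReal.ofReal q ^ #(A a) ≤ 1 - ENNReal.ofReal q ^ m :=
          tsub_le_tsub_left
            (pow_le_pow_of_le_one zero_le (ENNReal.ofReal_le_one.2 hq1) (hm a)) 1
      _ = ENNReal.ofReal (1 - q ^ m) := by
          rw [← ENNReal.ofReal_pow hq0, ENNReal.ofReal_sub _ (by positivity), ENNReal.ofReal_one]
      _ ≤ ENNReal.ofReal (Real.exp (-q ^ m)) :=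
          ENNReal.ofReal_le_ofReal (Real.one_sub_le_exp_neg _)
  rw [hcompl, prob_compl_eq_one_sub (Set.to_countable _).measurableSet,
    productMeasure_forall_not_mem_fullyBlack _ hA, hmin,
    ENNReal.ofReal_sub _ (Real.exp_nonneg _), ENNReal.ofReal_one]
  refine tsub_le_tsub_left ?_ 1
  calc ∏ a, (1 - ENNReal.ofReal q ^ #(A a)) ≤ ∏ _a : ι, ENNReal.ofReal (Real.exp (-q ^ m)) :=
        prod_le_prod' fun a _ => hblock a
    _ = ENNReal.ofReal (Real.exp (-(Fintype.card ι * q ^ m))) := by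
        rw [prod_const, ← ENNReal.ofReal_pow (Real.exp_nonneg _), ← Real.exp_nat_mul,
          card_univ, mul_neg]

end ProductMeasure

theorem Finset.even_card_symmDiff_singleton_iff {α : Type*} [DecidableEq α] (S : Finset α)
    (j : α) : Even #(S ∆ {j}) ↔ ¬ Even #S := by
  by_cases hj : j ∈ S
  · rw [symmDiff_of_ge (singleton_subset_iff.2 hj), ← erase_eq, ← card_erase_add_one hj,
      Nat.even_add_one, not_not]
  · rw [(disjoint_singleton_right.2 hj).symmDiff_eq_sup, sup_eq_union, union_singleton,
      card_insert_of_notMem hj, Nat.even_add_one]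

theorem Finset.card_filter_even_powerset_le {α : Type*} [DecidableEq α] {J : Finset α}
    (hJ : J.Nonempty) : #(J.powerset.filter fun S => Even #S) ≤ 2 ^ (#J - 1) := by
  obtain ⟨j, hj⟩ := hJ
  -- toggling `j` maps even subsets of `J` injectively to odd ones
  have htoggle :
      #(J.powerset.filter fun S => Even #S) ≤ #(J.powerset.filter fun S => ¬ Even #S) := by
    refine card_le_card_of_injOn (· ∆ {j}) (fun S hS => ?_)
      (symmDiff_left_injective _).injOn
    rw [coe_filter, Set.mem_ofPred_eq, mem_powerset] at hS
    rw [coe_filter, Set.mem_ofPred_eq, mem_powerset, even_card_symmDiff_singleton_iff, not_not]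
    exact ⟨symmDiff_subset_union.trans (union_subset hS.1 (singleton_subset_iff.2 hj)), hS.2⟩
  have htotal := card_filter_add_card_filter_not (s := J.powerset) (fun S => Even #S)
  rw [card_powerset] at htotal
  have : 2 ^ #J = 2 * 2 ^ (#J - 1) := by
    rw [← pow_succ', Nat.sub_add_cancel (card_pos.2 ⟨j, hj⟩)]
  omega

section HyperSquare

variable {d L : ℕ}

theorem evenPart_subset_hyperSquare (i : TorusV d L) (J : Finset (Fin d)) :
    evenPart i J ⊆ hyperSquare i J :=
  image_subset_image (filter_subset _ _)

theorem card_evenPart_le (i : TorusV d L) {J : Finset (Fin d)} (hJ : J.Nonempty) :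
    #(evenPart i J) ≤ 2 ^ (#J - 1) :=
  card_image_le.trans (card_filter_even_powerset_le hJ)

theorem hsNode_injective [Fact (1 < L)] (i : TorusV d L) : Injective (hsNode i) := by
  intro S T h
  ext j
  have hj := congrFun h j
  simp only [hsNode] at hj
  split_ifs at hj with hS hT hT <;> simp_all

theorem hsNode_symmDiff_singleton_apply (i : TorusV d L) (S : Finset (Fin d)) (j k : Fin d) :
    hsNode i (S ∆ {j}) k =
      if k = j then (if j ∈ S then i j else i j + 1) else hsNode i S k := by
  by_cases hk : k = j
  · subst hk; by_cases hS : k ∈ S <;> simp [hsNode, mem_symmDiff, hS]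
  · simp [hsNode, mem_symmDiff, hk]

theorem torusGraph_adj_hsNode_symmDiff_singleton [Fact (1 < L)] (i : TorusV d L)
    (S : Finset (Fin d)) (j : Fin d) :
    (torusGraph d L).Adj (hsNode i S) (hsNode i (S ∆ {j})) := by
  refine ⟨fun h => ?_, j, ?_, fun k hk => by rw [hsNode_symmDiff_singleton_apply, if_neg hk]⟩
  · have hj := congrFun h j
    rw [hsNode_symmDiff_singleton_apply, if_pos rfl] at hj
    by_cases hS : j ∈ S <;> simp [hsNode, hS] at hj
  · rw [hsNode_symmDiff_singleton_apply, if_pos rfl]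
    by_cases hS : j ∈ S <;> simp [hsNode, hS]

end HyperSquare

section TwoWayBootstrap

variable {d L : ℕ} [NeZero L] [Fact (1 < L)] {i : TorusV d L} {J : Finset (Fin d)}
  {C : TorusV d L → Bool}

theorem gStep_hsNode_eq_true {S : Finset (Fin d)} (hS : S ⊆ J)
    (hC : ∀ T ⊆ J, (Even #T ↔ ¬ Even #S) → C (hsNode i T) = true) :
    gStep (torusGraph d L) #J C (hsNode i S) = true := by
  rw [gStep, decide_eq_true_eq]
  -- the `#J` neighbours `hsNode i (S ∆ {j})`, `j ∈ J`, are distinct and all black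
  have hinj : Injective fun j => hsNode i (S ∆ {j}) :=
    (hsNode_injective i).comp ((symmDiff_right_injective S).comp singleton_injective)
  rw [← card_image_of_injective J hinj]
  refine card_le_card fun u hu => ?_
  obtain ⟨j, hj, rfl⟩ := mem_image.1 hu
  refine mem_filter.2 ⟨mem_univ _, torusGraph_adj_hsNode_symmDiff_singleton i S j,
    hC _ ?_ (even_card_symmDiff_singleton_iff S j)⟩
  exact symmDiff_subset_union.trans (union_subset hS (singleton_subset_iff.2 hj))

theorem gStep_oddPart_of_evenPart (hC : ∀ v ∈ evenPart i J, C v = true) :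
    ∀ v ∈ oddPart i J, gStep (torusGraph d L) #J C v = true := by
  intro v hv
  obtain ⟨S, hS, rfl⟩ := mem_image.1 hv
  rw [mem_filter, mem_powerset] at hS
  refine gStep_hsNode_eq_true hS.1 fun T hT hTS => hC _ (mem_image_of_mem _ ?_)
  exact mem_filter.2 ⟨mem_powerset.2 hT, hTS.2 (Nat.not_even_iff_odd.2 hS.2)⟩

theorem gStep_evenPart_of_oddPart (hC : ∀ v ∈ oddPart i J, C v = true) :
    ∀ v ∈ evenPart i J, gStep (torusGraph d L) #J C v = true := by
  intro v hv
  obtain ⟨S, hS, rfl⟩ := mem_image.1 hv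
  rw [mem_filter, mem_powerset] at hS
  refine gStep_hsNode_eq_true hS.1 fun T hT hTS => hC _ (mem_image_of_mem _ ?_)
  exact mem_filter.2 ⟨mem_powerset.2 hT, Nat.not_even_iff_odd.1 fun hT' => hTS.1 hT' hS.2⟩

theorem evenPart_or_oddPart_black_iterate (hC : ∀ v ∈ evenPart i J, C v = true) (t : ℕ) :
    (∀ v ∈ evenPart i J, (gStep (torusGraph d L) #J)^[t] C v = true) ∨
      ∀ v ∈ oddPart i J, (gStep (torusGraph d L) #J)^[t] C v = true := by
  induction t with
  | zero => exact .inl hC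
  | succ t ih =>
    simp only [iterate_succ_apply']
    exact ih.symm.imp gStep_evenPart_of_oddPart gStep_oddPart_of_evenPart

theorem isBEternal_evenPart (i : TorusV d L) (hJ : J.Nonempty) :
    isBEternal (torusGraph d L) #J (evenPart i J) := by
  obtain ⟨j, hj⟩ := hJ
  have hempty : hsNode i ∅ ∈ evenPart i J :=
    mem_image_of_mem _ (mem_filter.2 ⟨empty_mem_powerset J, by simp⟩)
  have hsingleton : hsNode i {j} ∈ oddPart i J :=
    mem_image_of_mem _ (mem_filter.2 ⟨mem_powerset.2 (singleton_subset_iff.2 hj), by simp⟩)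
  exact fun C hC t => (evenPart_or_oddPart_black_iterate hC t).elim
    (fun h => ⟨_, h _ hempty⟩) (fun h => ⟨_, h _ hsingleton⟩)

end TwoWayBootstrap

section Tiling

variable {d L : ℕ}

def tileStart (a : Fin d → Fin (L / 2)) : TorusV d L :=
  fun j => ((2 * (a j : ℕ) : ℕ) : ZMod L)

theorem val_div_two_eq_of_mem_hyperSquare {a : Fin d → Fin (L / 2)} {J : Finset (Fin d)}
    {v : TorusV d L} (hv : v ∈ hyperSquare (tileStart a) J) (j : Fin d) :
    (v j).val / 2 = a j := by
  obtain ⟨S, -, rfl⟩ := mem_image.1 hv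
  have hlt : 2 * (a j : ℕ) + 1 < L := by have := (a j).isLt; omega
  have hnode :
      hsNode (tileStart a) S j = ((2 * (a j : ℕ) + if j ∈ S then 1 else 0 : ℕ) : ZMod L) := by
    simp only [hsNode, tileStart]
    split_ifs <;> push_cast <;> ring
  rw [hnode, ZMod.val_cast_of_lt (by split_ifs <;> omega)]
  split_ifs <;> omega

theorem pairwise_disjoint_hyperSquare_tileStart (J : Finset (Fin d)) :
    Pairwise (Disjoint on fun a : Fin d → Fin (L / 2) => hyperSquare (tileStart a) J) := by
  intro a b hab
  refine disjoint_left.2 fun v hva hvb => hab (funext fun j => Fin.ext ?_)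
  rw [← val_div_two_eq_of_mem_hyperSquare hva, ← val_div_two_eq_of_mem_hyperSquare hvb]

theorem productMeasure_exists_evenPart_fullyBlack_ge [NeZero L] {ι : Type*} [Fintype ι] {r : ℕ}
    (hr : r ≠ 0) {starts : ι → TorusV d L} {Js : ι → Finset (Fin d)}
    (hJs : ∀ a, #(Js a) = r)
    (hdisj : Pairwise (Disjoint on fun a => hyperSquare (starts a) (Js a))) {q : ℝ}
    (hq0 : 0 ≤ q) (hq1 : q ≤ 1) :
    ENNReal.ofReal (1 - Real.exp (-(Fintype.card ι * q ^ 2 ^ (r - 1)))) ≤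
      productMeasure (TorusV d L) (ENNReal.ofReal q)
        {C | ∃ a, C ∈ fullyBlack (evenPart (starts a) (Js a))} :=
  productMeasure_exists_mem_fullyBlack_ge
    (hdisj.mono fun a b h =>
      h.mono (evenPart_subset_hyperSquare _ _) (evenPart_subset_hyperSquare _ _))
    (fun a => by
      have h := card_evenPart_le (starts a) (J := Js a) (card_pos.1 (by rw [hJs a]; omega))
      rwa [hJs a] at h) hq0 hq1

end Tiling

section Asymptotics

noncomputable def critProb (d r : ℕ) (μ : ℝ) (L : ℕ) : ℝ :=
  μ * (L : ℝ) ^ (-(d : ℝ) / 2 ^ (r - 1))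

variable {d r : ℕ} {μ : ℝ}

theorem critProb_nonneg (hμ : 0 ≤ μ) (L : ℕ) : 0 ≤ critProb d r μ L :=
  mul_nonneg hμ (Real.rpow_nonneg (Nat.cast_nonneg L) _)

theorem critProb_pow (L : ℕ) : critProb d r μ L ^ 2 ^ (r - 1) = μ ^ 2 ^ (r - 1) / L ^ d := by
  rw [critProb, mul_pow, ← Real.rpow_natCast ((L : ℝ) ^ _) (2 ^ (r - 1)),
    ← Real.rpow_mul (Nat.cast_nonneg L),
    Nat.cast_pow, Nat.cast_ofNat, div_mul_cancel₀ _ (by positivity),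
    Real.rpow_neg (Nat.cast_nonneg L), Real.rpow_natCast, div_eq_mul_inv]

theorem tendsto_critProb (hd : d ≠ 0) : Tendsto (critProb d r μ) atTop (𝓝 0) := by
  have := ((tendsto_rpow_neg_atTop (y := d / 2 ^ (r - 1)) (by positivity)).comp
    tendsto_natCast_atTop_atTop).const_mul μ
  unfold critProb
  simpa [neg_div, comp_def] using this

theorem tendsto_floor_div_mul_critProb_pow (hd : d ≠ 0) {γ : ℝ} (hγ : 0 < γ) :
    Tendsto (fun L : ℕ => (⌊(L : ℝ) ^ d / γ⌋₊ : ℝ) * critProb d r μ L ^ 2 ^ (r - 1))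
      atTop (𝓝 (μ ^ 2 ^ (r - 1) / γ)) := by
  have hX : Tendsto (fun L : ℕ => (L : ℝ) ^ d / γ) atTop atTop :=
    ((tendsto_pow_atTop hd).comp tendsto_natCast_atTop_atTop).atTop_div_const hγ
  have := (tendsto_nat_floor_div_atTop.comp hX).mul_const (μ ^ 2 ^ (r - 1) / γ)
  rw [one_mul] at this
  refine this.congr' ((eventually_ne_atTop 0).mono fun L hL => ?_)
  have : (L : ℝ) ^ d ≠ 0 := by positivity
  simp only [comp_apply, critProb_pow]
  field_simp

theorem div_four_pow_le_half_pow_mul_critProb_pow (hμ : 0 ≤ μ) {L : ℕ} (hL : 2 ≤ L) :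
    μ ^ 2 ^ (r - 1) / 4 ^ d ≤ ((L / 2 : ℕ) : ℝ) ^ d * critProb d r μ L ^ 2 ^ (r - 1) := by
  have hL4 : (L : ℝ) / 4 ≤ ((L / 2 : ℕ) : ℝ) := by
    rw [div_le_iff₀ (by norm_num)]
    exact_mod_cast (by omega : L ≤ L / 2 * 4)
  have : (L : ℝ) ^ d ≠ 0 := by positivity
  calc μ ^ 2 ^ (r - 1) / 4 ^ d = ((L : ℝ) / 4) ^ d * (μ ^ 2 ^ (r - 1) / L ^ d) := by
        rw [div_pow]; field_simp
    _ ≤ ((L / 2 : ℕ) : ℝ) ^ d * critProb d r μ L ^ 2 ^ (r - 1) := by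
        rw [critProb_pow]; gcongr

end Asymptotics

theorem stmt_12 (d r : ℕ) (hr : 2 ≤ r) (hrd : r ≤ d) (μ : ℝ) (hμ : 0 < μ) :
    (∀ ε : ℝ, 0 < ε → ∃ L0 : ℕ, ∀ (L : ℕ) [NeZero L], L0 ≤ L →
      ∀ (starts : Fin (⌊(L : ℝ) ^ d / 2 ^ r⌋₊) → TorusV d L)
        (Js : Fin (⌊(L : ℝ) ^ d / 2 ^ r⌋₊) → Finset (Fin d)),
        (∀ a, (Js a).card = r) →
        (∀ a b, a ≠ b →
          Disjoint (hyperSquare (starts a) (Js a)) (hyperSquare (starts b) (Js b))) →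
        productMeasure (TorusV d L)
            (ENNReal.ofReal (μ * (L : ℝ) ^ (-(d : ℝ) / 2 ^ (r - 1))))
          {C | ∃ a, ∀ v ∈ evenPart (starts a) (Js a), C v = true} ≥
          ENNReal.ofReal (1 - Real.exp (-(μ ^ 2 ^ (r - 1)) / 2 ^ r) - ε)) ∧
    (∃ c : ℝ, 0 < c ∧ ∃ L0 : ℕ, ∀ (L : ℕ) [NeZero L], L0 ≤ L →
      productMeasure (TorusV d L)
          (ENNReal.ofReal (μ * (L : ℝ) ^ (-(d : ℝ) / 2 ^ (r - 1))))
        {C | ∀ t, ∃ v, (gStep (torusGraph d L) r)^[t] C v = true} ≥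
        ENNReal.ofReal c) := by
  
  have hd : d ≠ 0 := by omega
  have hr0 : r ≠ 0 := by omega
  refine ⟨fun ε hε => ?_, ?_⟩
  · have hlim := ((tendsto_floor_div_mul_critProb_pow (r := r) (μ := μ) hd
      (by positivity : (0 : ℝ) < 2 ^ r)).neg.rexp.const_sub 1).eventually_const_lt
      (sub_lt_self _ hε)
    obtain ⟨L0, hL0⟩ :=
      eventually_atTop.1 (((tendsto_critProb hd).eventually_lt_const one_pos).and hlim)
    refine ⟨L0, fun L _ hL starts Js hJs hdisj => ?_⟩
    obtain ⟨hp1, hbound⟩ := hL0 L hL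
    have hblack := productMeasure_exists_evenPart_fullyBlack_ge hr0 hJs hdisj
      (critProb_nonneg hμ.le L) hp1.le
    rw [Fintype.card_fin] at hblack
    rw [neg_div (2 ^ r : ℝ)]
    exact (ENNReal.ofReal_le_ofReal hbound.le).trans hblack
  · obtain ⟨J, -, hJ⟩ :=
      exists_subset_card_eq (s := (univ : Finset (Fin d))) (by simpa using hrd)
    refine ⟨1 - Real.exp (-(μ ^ 2 ^ (r - 1) / 4 ^ d)),
      sub_pos.2 (Real.exp_lt_one_iff.2 (neg_lt_zero.2 (by positivity))), ?_⟩
    obtain ⟨L0, hL0⟩ := eventually_atTop.1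
      ((tendsto_critProb (r := r) (μ := μ) hd).eventually_lt_const one_pos)
    refine ⟨max 2 L0, fun L _ hL => ?_⟩
    have : Fact (1 < L) := ⟨by omega⟩
    have hblack := productMeasure_exists_evenPart_fullyBlack_ge hr0 (fun _ => hJ)
      (pairwise_disjoint_hyperSquare_tileStart (L := L) J) (critProb_nonneg hμ.le L)
      (hL0 L (le_of_max_le_right hL)).le
    have hsurvive : {C | ∃ a, C ∈ fullyBlack (evenPart (tileStart a) J)} ⊆
        {C | ∀ t, ∃ v, (gStep (torusGraph d L) r)^[t] C v = true} := fun C ⟨a, ha⟩ =>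
      hJ ▸ isBEternal_evenPart (tileStart a) (card_pos.1 (by omega)) C ha
    refine le_trans ?_ (hblack.trans (measure_mono hsurvive))
    rw [Fintype.card_fun, Fintype.card_fin, Fintype.card_fin, Nat.cast_pow]
    gcongr
    exact div_four_pow_le_half_pow_mul_critProb_pow hμ.le (le_of_max_le_left hL)
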